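/- Let Q be a weight list which contracts to a smooth point and contains a unique (−1)-curve. If K·Q = 2, then, up to reversal, Q is one of [(2)_k, 5, 1, 2, 2, 2], [(2)_k, 4, 2, 1, 3, 2], [(2)_k, 3, 3, 1, 2, 3], [(2)_k, 3, 2, 2, 1, 4] for some integer k ≥ 0. -/

import Mathlib

/-- One contraction move on a weight list: an entry equal to `1` (representing a
`(-1)`-curve) is removed and the weights of its neighbours are decreased by one. -/
inductive ContractionStep : List ℤ → List ℤ → Prop
  | mid (L R : List ℤ) (a b : ℤ) :
      ContractionStep (L ++ a :: 1 :: b :: R) (L ++ (a - 1) :: (b - 1) :: R)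
  | head (b : ℤ) (R : List ℤ) :
      ContractionStep (1 :: b :: R) ((b - 1) :: R)
  | last (L : List ℤ) (a : ℤ) :
      ContractionStep (L ++ [a, 1]) (L ++ [a - 1])
  | single : ContractionStep [1] []

/-- A weight list contracts to a smooth point if some finite sequence of
contraction moves transforms it into the empty list. -/
def ContractsToPoint (Q : List ℤ) : Prop :=
  Relation.ReflTransGen ContractionStep Q []

/-- `K·Q = Σᵢ (aᵢ - 2)`, the intersection of the chain with the canonical divisor. -/
def kDot (Q : List ℤ) : ℤ := (Q.map (fun a => a - 2)).sum

set_option maxHeartbeats 1000000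

structure M2 where
  a : ℤ
  b : ℤ
  c : ℤ
  d : ℤ

def M2.mul (X Y : M2) : M2 :=
  ⟨X.a*Y.a + X.b*Y.c, X.a*Y.b + X.b*Y.d, X.c*Y.a + X.d*Y.c, X.c*Y.b + X.d*Y.d⟩

def fM : List ℤ → M2
  | [] => ⟨1,0,0,1⟩
  | x :: L => (M2.mk x (-1) 1 0).mul (fM L)

lemma M2.one_mul (X : M2) : (M2.mk 1 0 0 1).mul X = X := by
  cases X; simp [M2.mul]

lemma M2.mul_assoc (X Y Z : M2) : (X.mul Y).mul Z = X.mul (Y.mul Z) := by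
  cases X; cases Y; cases Z; simp only [M2.mul, M2.mk.injEq]; refine ⟨by ring, by ring, by ring, by ring⟩

lemma fM_append (L1 L2 : List ℤ) : fM (L1 ++ L2) = (fM L1).mul (fM L2) := by
  induction L1 with
  | nil => simp [fM, M2.one_mul]
  | cons x L ih => simp [fM, ih, M2.mul_assoc]

lemma step_fM {Q Q' : List ℤ} (h : ContractionStep Q Q') : (fM Q).a = (fM Q').a := by
  cases h with
  | mid L R a b =>
      have key : fM (a :: 1 :: b :: R) = fM ((a-1) :: (b-1) :: R) := by
        simp only [fM, M2.mul, M2.mk.injEq]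
        refine ⟨by ring, by ring, by ring, by ring⟩
      rw [show (L ++ a :: 1 :: b :: R) = L ++ (a :: 1 :: b :: R) from rfl,
        show (L ++ (a-1) :: (b-1) :: R) = L ++ ((a-1) :: (b-1) :: R) from rfl,
        fM_append, fM_append, key]
  | head b R =>
      simp only [fM, M2.mul]
      ring
  | last L a =>
      rw [fM_append, fM_append]
      have key1 : (fM [a, 1]).a = (fM [a-1]).a := by simp [fM, M2.mul]; ring
      have key2 : (fM [a, 1]).c = (fM [a-1]).c := by simp [fM, M2.mul]
      simp only [M2.mul]
      rw [key1, key2]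
  | single => simp [fM, M2.mul]

lemma contracts_fM {Q : List ℤ} (h : ContractsToPoint Q) : (fM Q).a = 1 := by
  unfold ContractsToPoint at h
  induction h using Relation.ReflTransGen.head_induction_on with
  | refl => simp [fM]
  | head h' _ ih => rw [step_fM h', ih]

lemma step_pos {Q Q' : List ℤ} (h : ContractionStep Q Q') (hQ' : ∀ x ∈ Q', 1 ≤ x) :
    ∀ x ∈ Q, 1 ≤ x := by
  cases h with
  | mid L R a b =>
      intro x hx
      simp only [List.mem_append, List.mem_cons] at hx hQ' ⊢
      rcases hx with h1 | h1 | h1 | h1 | h1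
      · exact hQ' x (Or.inl h1)
      · have := hQ' (a-1) (Or.inr (Or.inl rfl)); omega
      · omega
      · have := hQ' (b-1) (Or.inr (Or.inr (Or.inl rfl))); omega
      · exact hQ' x (Or.inr (Or.inr (Or.inr h1)))
  | head b R =>
      intro x hx
      simp only [List.mem_cons] at hx hQ'
      rcases hx with h1 | h1 | h1
      · omega
      · have := hQ' (b-1) (Or.inl rfl); omega
      · exact hQ' x (Or.inr h1)
  | last L a =>
      intro x hx
      simp only [List.mem_append, List.mem_cons] at hx hQ'
      rcases hx with h1 | h1 | h1
      · exact hQ' x (Or.inl h1)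
      · have := hQ' (a-1) (Or.inr (Or.inl rfl)); omega
      · simp at h1; omega
  | single => intro x hx; simp at hx; omega

lemma contracts_pos {Q : List ℤ} (h : ContractsToPoint Q) : ∀ x ∈ Q, 1 ≤ x := by
  unfold ContractsToPoint at h
  induction h using Relation.ReflTransGen.head_induction_on with
  | refl => simp
  | head h' _ ih => exact step_pos h' ih

lemma fM_rep2 (k : ℕ) : fM (List.replicate k (2:ℤ)) = ⟨(k:ℤ)+1, -(k:ℤ), (k:ℤ), 1-(k:ℤ)⟩ := by
  induction k with
  | zero => simp [fM]
  | succ n ih =>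
      rw [List.replicate_succ, show fM (2 :: List.replicate n (2:ℤ)) =
        (M2.mk 2 (-1) 1 0).mul (fM (List.replicate n (2:ℤ))) from rfl, ih]
      simp only [M2.mul, M2.mk.injEq]
      push_cast
      refine ⟨by ring, by ring, by ring, by ring⟩

lemma fM_reverse (L : List ℤ) :
    fM L.reverse = ⟨(fM L).a, -(fM L).c, -(fM L).b, (fM L).d⟩ := by
  induction L with
  | nil => simp [fM]
  | cons x L ih =>
      rw [List.reverse_cons, fM_append, ih,
        show fM (x :: L) = (M2.mk x (-1) 1 0).mul (fM L) from rfl]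
      simp only [fM, M2.mul, M2.mk.injEq]
      refine ⟨by ring, by ring, by ring, by ring⟩

lemma kDot_cons (x : ℤ) (L : List ℤ) : kDot (x :: L) = (x - 2) + kDot L := by
  simp [kDot]

lemma kDot_append (L1 L2 : List ℤ) : kDot (L1 ++ L2) = kDot L1 + kDot L2 := by
  simp [kDot]

lemma kDot_nonneg {L : List ℤ} (h : ∀ x ∈ L, 2 ≤ x) : 0 ≤ kDot L := by
  induction L with
  | nil => simp [kDot]
  | cons x L ih =>
      rw [kDot_cons]
      have h1 := h x (by simp)
      have h2 : 0 ≤ kDot L := ih (fun y hy => h y (by simp [hy]))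
      omega

lemma kDot_reverse (L : List ℤ) : kDot L.reverse = kDot L := by
  simp [kDot, List.map_reverse, List.sum_reverse]

/-- Decomposition around the unique 1. -/
lemma decompose {Q : List ℤ} (h : Q.count 1 = 1) :
    ∃ A B : List ℤ, Q = A ++ 1 :: B ∧ (1:ℤ) ∉ A ∧ (1:ℤ) ∉ B := by
  have hm : (1:ℤ) ∈ Q := by
    rw [← List.count_pos_iff]
    omega
  obtain ⟨A, B, rfl⟩ := List.append_of_mem hm
  refine ⟨A, B, rfl, ?_, ?_⟩ <;>
  · rw [← List.count_eq_zero]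
    rw [List.count_append, List.count_cons] at h
    simp at h
    omega

/-- Shape of entries-≥2 lists with excess 0. -/
lemma shape0 : ∀ A : List ℤ, (∀ x ∈ A, 2 ≤ x) → kDot A = 0 →
    ∃ k, A = List.replicate k (2:ℤ) := by
  intro A
  induction A with
  | nil => intro _ _; exact ⟨0, rfl⟩
  | cons x T ih =>
      intro hm hk
      have hx := hm x (by simp)
      have hT : ∀ y ∈ T, 2 ≤ y := fun y hy => hm y (by simp [hy])
      have hTn := kDot_nonneg hT
      rw [kDot_cons] at hk
      have hx2 : x = 2 := by omega
      obtain ⟨k, rfl⟩ := ih hT (by omega)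
      exact ⟨k+1, by rw [hx2, List.replicate_succ]⟩

lemma shape1 : ∀ A : List ℤ, (∀ x ∈ A, 2 ≤ x) → kDot A = 1 →
    ∃ k l, A = List.replicate k (2:ℤ) ++ 3 :: List.replicate l (2:ℤ) := by
  intro A
  induction A with
  | nil => intro _ hk; simp [kDot] at hk
  | cons x T ih =>
      intro hm hk
      have hx := hm x (by simp)
      have hT : ∀ y ∈ T, 2 ≤ y := fun y hy => hm y (by simp [hy])
      have hTn := kDot_nonneg hT
      rw [kDot_cons] at hk
      rcases (by omega : x = 2 ∨ x = 3) with h2 | h3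
      · obtain ⟨k, l, rfl⟩ := ih hT (by omega)
        exact ⟨k+1, l, by rw [h2, List.replicate_succ]; rfl⟩
      · obtain ⟨l, rfl⟩ := shape0 T hT (by omega)
        exact ⟨0, l, by rw [h3]; rfl⟩

lemma shape2 : ∀ A : List ℤ, (∀ x ∈ A, 2 ≤ x) → kDot A = 2 →
    (∃ k l, A = List.replicate k (2:ℤ) ++ 4 :: List.replicate l (2:ℤ)) ∨
    (∃ k l m, A = List.replicate k (2:ℤ) ++ 3 :: List.replicate l (2:ℤ)
        ++ 3 :: List.replicate m (2:ℤ)) := by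
  intro A
  induction A with
  | nil => intro _ hk; simp [kDot] at hk
  | cons x T ih =>
      intro hm hk
      have hx := hm x (by simp)
      have hT : ∀ y ∈ T, 2 ≤ y := fun y hy => hm y (by simp [hy])
      have hTn := kDot_nonneg hT
      rw [kDot_cons] at hk
      rcases (by omega : x = 2 ∨ x = 3 ∨ x = 4) with h2 | h3 | h4
      · rcases ih hT (by omega) with ⟨k, l, rfl⟩ | ⟨k, l, m, rfl⟩
        · exact Or.inl ⟨k+1, l, by rw [h2, List.replicate_succ]; rfl⟩
        · exact Or.inr ⟨k+1, l, m, by rw [h2, List.replicate_succ]; rfl⟩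
      · obtain ⟨l, m, rfl⟩ := shape1 T hT (by omega)
        exact Or.inr ⟨0, l, m, by rw [h3]; rfl⟩
      · obtain ⟨l, rfl⟩ := shape0 T hT (by omega)
        exact Or.inl ⟨0, l, by rw [h4]; rfl⟩

lemma shape3 : ∀ A : List ℤ, (∀ x ∈ A, 2 ≤ x) → kDot A = 3 →
    (∃ k l, A = List.replicate k (2:ℤ) ++ 5 :: List.replicate l (2:ℤ)) ∨
    (∃ k l m, A = List.replicate k (2:ℤ) ++ 4 :: List.replicate l (2:ℤ)
        ++ 3 :: List.replicate m (2:ℤ)) ∨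
    (∃ k l m, A = List.replicate k (2:ℤ) ++ 3 :: List.replicate l (2:ℤ)
        ++ 4 :: List.replicate m (2:ℤ)) ∨
    (∃ k l m n, A = List.replicate k (2:ℤ) ++ 3 :: List.replicate l (2:ℤ)
        ++ 3 :: List.replicate m (2:ℤ) ++ 3 :: List.replicate n (2:ℤ)) := by
  intro A
  induction A with
  | nil => intro _ hk; simp [kDot] at hk
  | cons x T ih =>
      intro hm hk
      have hx := hm x (by simp)
      have hT : ∀ y ∈ T, 2 ≤ y := fun y hy => hm y (by simp [hy])
      have hTn := kDot_nonneg hT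
      rw [kDot_cons] at hk
      rcases (by omega : x = 2 ∨ x = 3 ∨ x = 4 ∨ x = 5) with h2 | h3 | h4 | h5
      · rcases ih hT (by omega) with ⟨k, l, rfl⟩ | ⟨k, l, m, rfl⟩ | ⟨k, l, m, rfl⟩ |
          ⟨k, l, m, n, rfl⟩
        · exact Or.inl ⟨k+1, l, by rw [h2, List.replicate_succ]; rfl⟩
        · exact Or.inr (Or.inl ⟨k+1, l, m, by rw [h2, List.replicate_succ]; rfl⟩)
        · exact Or.inr (Or.inr (Or.inl ⟨k+1, l, m, by rw [h2, List.replicate_succ]; rfl⟩))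
        · exact Or.inr (Or.inr (Or.inr ⟨k+1, l, m, n, by rw [h2, List.replicate_succ]; rfl⟩))
      · rcases shape2 T hT (by omega) with ⟨l, m, rfl⟩ | ⟨l, m, n, rfl⟩
        · exact Or.inr (Or.inr (Or.inl ⟨0, l, m, by rw [h3]; rfl⟩))
        · exact Or.inr (Or.inr (Or.inr ⟨0, l, m, n, by rw [h3]; rfl⟩))
      · obtain ⟨l, m, rfl⟩ := shape1 T hT (by omega)
        exact Or.inr (Or.inl ⟨0, l, m, by rw [h4]; rfl⟩)
      · obtain ⟨l, rfl⟩ := shape0 T hT (by omega)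
        exact Or.inl ⟨0, l, by rw [h5]; rfl⟩

lemma fM_cons (x : ℤ) (L : List ℤ) : fM (x :: L) = (M2.mk x (-1) 1 0).mul (fM L) := rfl

lemma evalS1 (a b c : ℕ) :
    (fM ((List.replicate a (2:ℤ) ++ 5 :: List.replicate b (2:ℤ))
      ++ 1 :: List.replicate c (2:ℤ))).a
      = -3*(a:ℤ)*b*c - a*c + 3*a - 4*b*c - c + 4 := by
  simp only [fM_append, fM_cons, fM_rep2, M2.mul]; ring

lemma evalS2 (a b c d : ℕ) :
    (fM ((List.replicate a (2:ℤ) ++ 4 :: List.replicate b (2:ℤ)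
      ++ 3 :: List.replicate c (2:ℤ)) ++ 1 :: List.replicate d (2:ℤ))).a
      = -2*(a:ℤ)*b*c*d - 2*a*b*d + 2*a*b - 5*a*c*d - 3*a*d + 5*a
        - 3*b*c*d - 3*b*d + 3*b - 7*c*d - 4*d + 7 := by
  simp only [fM_append, fM_cons, fM_rep2, M2.mul]; ring

lemma evalS3 (a b c d : ℕ) :
    (fM ((List.replicate a (2:ℤ) ++ 3 :: List.replicate b (2:ℤ)
      ++ 4 :: List.replicate c (2:ℤ)) ++ 1 :: List.replicate d (2:ℤ))).a
      = -2*(a:ℤ)*b*c*d - a*b*d + 2*a*b - 5*a*c*d - 2*a*d + 5*a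
        - 4*b*c*d - 2*b*d + 4*b - 8*c*d - 3*d + 8 := by
  simp only [fM_append, fM_cons, fM_rep2, M2.mul]; ring

lemma evalS4 (a b c d e : ℕ) :
    (fM ((List.replicate a (2:ℤ) ++ 3 :: List.replicate b (2:ℤ)
      ++ 3 :: List.replicate c (2:ℤ) ++ 3 :: List.replicate d (2:ℤ))
      ++ 1 :: List.replicate e (2:ℤ))).a
      = -(a:ℤ)*b*c*d*e - a*b*c*e + a*b*c - 3*a*b*d*e - 2*a*b*e + 3*a*b
        - 3*a*c*d*e - 3*a*c*e + 3*a*c - 8*a*d*e - 5*a*e + 8*a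
        - 2*b*c*d*e - 2*b*c*e + 2*b*c - 6*b*d*e - 4*b*e + 6*b
        - 5*c*d*e - 5*c*e + 5*c - 13*d*e - 8*e + 13 := by
  simp only [fM_append, fM_cons, fM_rep2, M2.mul]; ring

lemma evalS5 (a b c d : ℕ) :
    (fM ((List.replicate a (2:ℤ) ++ 4 :: List.replicate b (2:ℤ))
      ++ 1 :: (List.replicate c (2:ℤ) ++ 3 :: List.replicate d (2:ℤ)))).a
      = -2*(a:ℤ)*b*c*d - 4*a*b*c - 2*a*b*d - 2*a*b - a*c*d - 2*a*c + a*d + 3*a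
        - 3*b*c*d - 6*b*c - 3*b*d - 3*b - c*d - 2*c + 2*d + 5 := by
  simp only [fM_append, fM_cons, fM_rep2, M2.mul]; ring

lemma evalS6 (a b c d e : ℕ) :
    (fM ((List.replicate a (2:ℤ) ++ 3 :: List.replicate b (2:ℤ)
      ++ 3 :: List.replicate c (2:ℤ))
      ++ 1 :: (List.replicate d (2:ℤ) ++ 3 :: List.replicate e (2:ℤ)))).a
      = -(a:ℤ)*b*c*d*e - 2*a*b*c*d - a*b*c*e - a*b*c - a*b*d*e - 2*a*b*d + a*b
        - 3*a*c*d*e - 6*a*c*d - 3*a*c*e - 3*a*c - 2*a*d*e - 4*a*d + a*e + 4*a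
        - 2*b*c*d*e - 4*b*c*d - 2*b*c*e - 2*b*c - 2*b*d*e - 4*b*d + 2*b
        - 5*c*d*e - 10*c*d - 5*c*e - 5*c - 3*d*e - 6*d + 2*e + 7 := by
  simp only [fM_append, fM_cons, fM_rep2, M2.mul]; ring
lemma dioS1 (a b c : ℕ)
    (h : -3*(a:ℤ)*b*c - a*c + 3*a - 4*b*c - c + 4 = 1) : b = 0 ∧ c = 3 := by
  have ha : (0:ℤ) ≤ a := Int.natCast_nonneg a
  have hb : (0:ℤ) ≤ b := Int.natCast_nonneg b
  have hc : (0:ℤ) ≤ c := Int.natCast_nonneg c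
  rcases Nat.eq_zero_or_pos c with hc0 | hc1
  · subst hc0; push_cast at h; omega
  have hc1' : (1:ℤ) ≤ c := by exact_mod_cast hc1
  rcases Nat.eq_zero_or_pos b with hb0 | hb1
  · subst hb0
    push_cast at h
    have h2 : ((a:ℤ)+1)*((c:ℤ)-3) = 0 := by linear_combination -h
    rcases mul_eq_zero.mp h2 with h3 | h3
    · omega
    · have : (c:ℤ) = 3 := by omega
      exact ⟨rfl, by exact_mod_cast this⟩
  · exfalso
    have hb1' : (1:ℤ) ≤ b := by exact_mod_cast hb1
    nlinarith [mul_nonneg (mul_nonneg ha (sub_nonneg.mpr hb1')) hc,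
      mul_nonneg (sub_nonneg.mpr hb1') hc,
      mul_nonneg ha (sub_nonneg.mpr hc1'), mul_nonneg ha hc,
      mul_nonneg (mul_nonneg ha hb) hc, mul_nonneg hb hc]

lemma dioS2 (a b c d : ℕ)
    (h : -2*(a:ℤ)*b*c*d - 2*a*b*d + 2*a*b - 5*a*c*d - 3*a*d + 5*a
      - 3*b*c*d - 3*b*d + 3*b - 7*c*d - 4*d + 7 = 1) : False := by
  have ha : (0:ℤ) ≤ a := Int.natCast_nonneg a
  have hb : (0:ℤ) ≤ b := Int.natCast_nonneg b
  have hc : (0:ℤ) ≤ c := Int.natCast_nonneg c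
  have hd : (0:ℤ) ≤ d := Int.natCast_nonneg d
  have hab : (0:ℤ) ≤ (a:ℤ)*b := mul_nonneg ha hb
  have hac : (0:ℤ) ≤ (a:ℤ)*c := mul_nonneg ha hc
  have hbc : (0:ℤ) ≤ (b:ℤ)*c := mul_nonneg hb hc
  have habc : (0:ℤ) ≤ (a:ℤ)*b*c := mul_nonneg hab hc
  match d, hd with
  | 0, _ => push_cast at h; nlinarith
  | 1, _ =>
    push_cast at h
    rcases Nat.eq_zero_or_pos c with hc0 | hc1
    · subst hc0; push_cast at h; nlinarith
    · have hc1' : (1:ℤ) ≤ c := by exact_mod_cast hc1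
      nlinarith [mul_nonneg hab (sub_nonneg.mpr hc1'), mul_nonneg ha (sub_nonneg.mpr hc1'),
        mul_nonneg hb (sub_nonneg.mpr hc1')]
  | (n+2), _ =>
    push_cast at h
    have hn0 : (0:ℤ) ≤ (n:ℤ) := Int.natCast_nonneg n
    nlinarith [mul_nonneg habc hn0, mul_nonneg hab hn0, mul_nonneg hac hn0,
      mul_nonneg ha hn0, mul_nonneg hbc hn0, mul_nonneg hb hn0, mul_nonneg hc hn0, hn0,
      mul_nonneg (mul_nonneg habc hn0) hn0, mul_nonneg (mul_nonneg hac hn0) hn0,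
      mul_nonneg (mul_nonneg hbc hn0) hn0, mul_nonneg (mul_nonneg hc hn0) hn0]

lemma dioS3 (a b c d : ℕ)
    (h : -2*(a:ℤ)*b*c*d - a*b*d + 2*a*b - 5*a*c*d - 2*a*d + 5*a
      - 4*b*c*d - 2*b*d + 4*b - 8*c*d - 3*d + 8 = 1) : False := by
  have ha : (0:ℤ) ≤ a := Int.natCast_nonneg a
  have hb : (0:ℤ) ≤ b := Int.natCast_nonneg b
  have hc : (0:ℤ) ≤ c := Int.natCast_nonneg c
  have hd : (0:ℤ) ≤ d := Int.natCast_nonneg d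
  have hab : (0:ℤ) ≤ (a:ℤ)*b := mul_nonneg ha hb
  rcases Nat.eq_zero_or_pos c with hc0 | hc1
  · subst hc0
    push_cast at h
    -- d*(ab+2a+2b+3) = 2ab+5a+4b+7
    match d, hd with
    | 0, _ => push_cast at h; nlinarith
    | 1, _ => push_cast at h; nlinarith
    | 2, _ => push_cast at h; nlinarith
    | (n+3), _ =>
      push_cast at h
      have hn : (0:ℤ) ≤ (n:ℤ) := Int.natCast_nonneg n
      nlinarith [mul_nonneg hab hn, mul_nonneg ha hn, mul_nonneg hb hn, hn]
  · have hc1' : (1:ℤ) ≤ c := by exact_mod_cast hc1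
    have hD : (0:ℤ) ≤ 2*(a:ℤ)*b*c + a*b + 5*a*c + 2*a + 4*b*c + 2*b + 8*c + 3 := by
      positivity
    rcases Nat.eq_zero_or_pos d with hd0 | hd1
    · subst hd0; push_cast at h; nlinarith
    · have hd1' : (1:ℤ) ≤ d := by exact_mod_cast hd1
      nlinarith [mul_nonneg (sub_nonneg.mpr hd1') hD,
        mul_nonneg hab (sub_nonneg.mpr hc1'), mul_nonneg ha (sub_nonneg.mpr hc1'),
        mul_nonneg hb (sub_nonneg.mpr hc1'), sub_nonneg.mpr hc1']

lemma dioS4 (a b c d e : ℕ)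
    (h : -(a:ℤ)*b*c*d*e - a*b*c*e + a*b*c - 3*a*b*d*e - 2*a*b*e + 3*a*b
      - 3*a*c*d*e - 3*a*c*e + 3*a*c - 8*a*d*e - 5*a*e + 8*a
      - 2*b*c*d*e - 2*b*c*e + 2*b*c - 6*b*d*e - 4*b*e + 6*b
      - 5*c*d*e - 5*c*e + 5*c - 13*d*e - 8*e + 13 = 1) : False := by
  have ha : (0:ℤ) ≤ a := Int.natCast_nonneg a
  have hb : (0:ℤ) ≤ b := Int.natCast_nonneg b
  have hc : (0:ℤ) ≤ c := Int.natCast_nonneg c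
  have hd : (0:ℤ) ≤ d := Int.natCast_nonneg d
  have he : (0:ℤ) ≤ e := Int.natCast_nonneg e
  have hab : (0:ℤ) ≤ (a:ℤ)*b := mul_nonneg ha hb
  have hac : (0:ℤ) ≤ (a:ℤ)*c := mul_nonneg ha hc
  have hbc : (0:ℤ) ≤ (b:ℤ)*c := mul_nonneg hb hc
  have habc : (0:ℤ) ≤ (a:ℤ)*b*c := mul_nonneg hab hc
  rcases e with _ | _ | n
  · push_cast at h; nlinarith
  ·
    push_cast at h
    -- d*D' = ab+3a+2b+4 with D' ≥ 13
    have hD' : (0:ℤ) ≤ (a:ℤ)*b*c + 3*a*b + 3*a*c + 8*a + 2*b*c + 6*b + 5*c + 13 := by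
      positivity
    rcases Nat.eq_zero_or_pos d with hd0 | hd1
    · subst hd0; push_cast at h; nlinarith
    · have hd1' : (1:ℤ) ≤ d := by exact_mod_cast hd1
      nlinarith [mul_nonneg (sub_nonneg.mpr hd1') hD']
  ·
    push_cast at h
    have hn : (0:ℤ) ≤ (n:ℤ) := Int.natCast_nonneg n
    have hE : (0:ℤ) ≤ (a:ℤ)*b*c*d + a*b*c + 3*a*b*d + 2*a*b + 3*a*c*d + 3*a*c
        + 8*a*d + 5*a + 2*b*c*d + 2*b*c + 6*b*d + 4*b + 5*c*d + 5*c + 13*d + 8 := by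
      positivity
    linarith [mul_nonneg hn hE, mul_nonneg habc hd, mul_nonneg hab hd,
      mul_nonneg hac hd, mul_nonneg ha hd, mul_nonneg hbc hd, mul_nonneg hb hd,
      mul_nonneg hc hd, habc, hab, hac, ha, hbc, hb, hc, hd]

lemma dioS5 (a b c d : ℕ)
    (h : -2*(a:ℤ)*b*c*d - 4*a*b*c - 2*a*b*d - 2*a*b - a*c*d - 2*a*c + a*d + 3*a
      - 3*b*c*d - 6*b*c - 3*b*d - 3*b - c*d - 2*c + 2*d + 5 = 1) :
    (b = 1 ∧ c = 0 ∧ d = 1) ∨ (a = 0 ∧ b = 0 ∧ c = 2) := by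
  have ha : (0:ℤ) ≤ a := Int.natCast_nonneg a
  have hb : (0:ℤ) ≤ b := Int.natCast_nonneg b
  have hc : (0:ℤ) ≤ c := Int.natCast_nonneg c
  have hd : (0:ℤ) ≤ d := Int.natCast_nonneg d
  have had : (0:ℤ) ≤ (a:ℤ)*d := mul_nonneg ha hd
  match b, hb with
  | 0, _ =>
    push_cast at h
    -- c*(a+1)*(d+2) = a*d+3a+2d+4
    match c, hc with
    | 0, _ => push_cast at h; exfalso; nlinarith
    | 1, _ => push_cast at h; exfalso; nlinarith
    | 2, _ =>
      push_cast at h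
      have key : (a:ℤ) * ((d:ℤ)+1) = 0 := by linear_combination -h
      rcases mul_eq_zero.mp key with h1 | h1
      · exact Or.inr ⟨by exact_mod_cast h1, rfl, rfl⟩
      · exfalso; omega
    | (n+3), _ =>
      push_cast at h
      exfalso
      have hn : (0:ℤ) ≤ (n:ℤ) := Int.natCast_nonneg n
      linarith [mul_nonneg hn had, mul_nonneg hn ha, mul_nonneg hn hd, hn, had, ha, hd]
  | 1, _ =>
    push_cast at h
    match c, hc with
    | 0, _ =>
      push_cast at h
      have key : ((a:ℤ)+1) * ((d:ℤ)-1) = 0 := by linear_combination -h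
      rcases mul_eq_zero.mp key with h1 | h1
      · exfalso; omega
      · have : (d:ℤ) = 1 := by omega
        exact Or.inl ⟨rfl, rfl, by exact_mod_cast this⟩
    | (m+1), _ =>
      push_cast at h
      exfalso
      have hm : (0:ℤ) ≤ (m:ℤ) := Int.natCast_nonneg m
      linarith [mul_nonneg (mul_nonneg ha hm) hd, mul_nonneg ha hm,
        mul_nonneg hm hd, mul_nonneg (mul_nonneg ha hd) hm, had,
        mul_nonneg ha hd, hm, ha, hd]
  | (m+2), _ =>
    push_cast at h
    exfalso
    have hm : (0:ℤ) ≤ (m:ℤ) := Int.natCast_nonneg m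
    have hmons : (0:ℤ) ≤ 2*(a:ℤ)*(m+2)*c*d + 4*a*(m+2)*c + a*c*d + 2*a*c
        + 3*(m+2)*c*d + 6*(m+2)*c + c*d + 2*c := by positivity
    linarith [hmons, mul_nonneg (mul_nonneg hm ha) hd, mul_nonneg hm ha,
      mul_nonneg hm hd, hm, had, ha, hd]

lemma dioS6 (a b c d e : ℕ)
    (h : -(a:ℤ)*b*c*d*e - 2*a*b*c*d - a*b*c*e - a*b*c - a*b*d*e - 2*a*b*d + a*b
      - 3*a*c*d*e - 6*a*c*d - 3*a*c*e - 3*a*c - 2*a*d*e - 4*a*d + a*e + 4*a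
      - 2*b*c*d*e - 4*b*c*d - 2*b*c*e - 2*b*c - 2*b*d*e - 4*b*d + 2*b
      - 5*c*d*e - 10*c*d - 5*c*e - 5*c - 3*d*e - 6*d + 2*e + 7 = 1) :
    b = 0 ∧ c = 0 ∧ d = 1 ∧ e = 0 := by
  have ha : (0:ℤ) ≤ a := Int.natCast_nonneg a
  have hb : (0:ℤ) ≤ b := Int.natCast_nonneg b
  have hc : (0:ℤ) ≤ c := Int.natCast_nonneg c
  have hd : (0:ℤ) ≤ d := Int.natCast_nonneg d
  have he : (0:ℤ) ≤ e := Int.natCast_nonneg e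
  have hab : (0:ℤ) ≤ (a:ℤ)*b := mul_nonneg ha hb
  have hae : (0:ℤ) ≤ (a:ℤ)*e := mul_nonneg ha he
  have hbe : (0:ℤ) ≤ (b:ℤ)*e := mul_nonneg hb he
  have habe : (0:ℤ) ≤ (a:ℤ)*b*e := mul_nonneg hab he
  rcases c with _ | m
  ·
    push_cast at h
    rcases d with _ | _ | n
    · exfalso; push_cast at h; linarith [hab, hae, ha, hb, he]
    ·
      push_cast at h
      have key : (a:ℤ)*b*e + a*b + a*e + 2*b*e + 2*b + e = 0 := by linear_combination -h
      have hb0 : (b:ℤ) = 0 := by linarith [habe, hab, hae, hbe, he, hb]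
      have he0 : (e:ℤ) = 0 := by linarith [habe, hab, hae, hbe, hb, he]
      exact ⟨by exact_mod_cast hb0, rfl, rfl, by exact_mod_cast he0⟩
    ·
      exfalso
      push_cast at h
      have hn : (0:ℤ) ≤ (n:ℤ) := Int.natCast_nonneg n
      have hD0 : (0:ℤ) ≤ (a:ℤ)*b*e + 2*a*b + 2*a*e + 4*a + 2*b*e + 4*b + 3*e + 6 := by
        positivity
      linarith [mul_nonneg hn hD0, habe, hab, hae, hbe, ha, hb, he]
  ·
    exfalso
    push_cast at h
    have hm : (0:ℤ) ≤ (m:ℤ) := Int.natCast_nonneg m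
    rcases d with _ | k
    ·
      push_cast at h
      rcases m with _ | j
      ·
        push_cast at h
        have key : (a:ℤ)+1 = e*((a:ℤ)*b+2*a+2*b+3) := by linear_combination h
        rcases e with _ | k
        · push_cast at key; omega
        ·
          push_cast at key
          have hk : (0:ℤ) ≤ (k:ℤ) := Int.natCast_nonneg k
          linarith [mul_nonneg hk hab, mul_nonneg hk ha, mul_nonneg hk hb, hk,
            hab, ha, hb]
      ·
        push_cast at h
        have hj : (0:ℤ) ≤ (j:ℤ) := Int.natCast_nonneg j
        have hM : (0:ℤ) ≤ (a:ℤ)*b*e + a*b + 3*a*e + 3*a + 2*b*e + 2*b + 5*e + 5 := by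
          positivity
        linarith [mul_nonneg hj hM, habe, hab, hae, hbe, ha, hb, he]
    ·
      push_cast at h
      have hk : (0:ℤ) ≤ (k:ℤ) := Int.natCast_nonneg k
      have hD : (0:ℤ) ≤ (a:ℤ)*b*((m:ℤ)+1)*e + 2*a*b*((m:ℤ)+1) + a*b*e + 2*a*b
          + 3*a*((m:ℤ)+1)*e + 6*a*((m:ℤ)+1) + 2*a*e + 4*a + 2*b*((m:ℤ)+1)*e
          + 4*b*((m:ℤ)+1) + 2*b*e + 4*b + 5*((m:ℤ)+1)*e + 10*((m:ℤ)+1) + 3*e + 6 := by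
        positivity
      have hR : (0:ℤ) ≤ ((m:ℤ)+1)*((a:ℤ)*b*e + a*b + 3*a*e + 3*a + 2*b*e + 2*b
          + 5*e + 5) := by positivity
      have hDL : (0:ℤ) ≤ (a:ℤ)*b*((m:ℤ)+1)*e + 2*a*b*((m:ℤ)+1) + a*b*e + a*b
          + 3*a*((m:ℤ)+1)*e + 6*a*((m:ℤ)+1) + a*e + 2*b*((m:ℤ)+1)*e + 4*b*((m:ℤ)+1)
          + 2*b*e + 2*b + 5*((m:ℤ)+1)*e + 10*(m:ℤ) + e := by positivity
      linarith [mul_nonneg hk hD, hR, hDL]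

set_option maxHeartbeats 1000000 in
lemma core (A B : List ℤ) (hA : ∀ x ∈ A, 2 ≤ x) (hB : ∀ x ∈ B, 2 ≤ x)
    (hk : kDot A + kDot B = 3) (hge : 2 ≤ kDot A)
    (hp : (fM (A ++ 1 :: B)).a = 1) :
    ∃ k : ℕ,
      (A ++ 1 :: B = List.replicate k (2:ℤ) ++ [5, 1, 2, 2, 2] ∨
        A ++ 1 :: B = (List.replicate k (2:ℤ) ++ [5, 1, 2, 2, 2]).reverse) ∨
      (A ++ 1 :: B = List.replicate k (2:ℤ) ++ [4, 2, 1, 3, 2] ∨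
        A ++ 1 :: B = (List.replicate k (2:ℤ) ++ [4, 2, 1, 3, 2]).reverse) ∨
      (A ++ 1 :: B = List.replicate k (2:ℤ) ++ [3, 3, 1, 2, 3] ∨
        A ++ 1 :: B = (List.replicate k (2:ℤ) ++ [3, 3, 1, 2, 3]).reverse) ∨
      (A ++ 1 :: B = List.replicate k (2:ℤ) ++ [3, 2, 2, 1, 4] ∨
        A ++ 1 :: B = (List.replicate k (2:ℤ) ++ [3, 2, 2, 1, 4]).reverse) := by
  have hBn := kDot_nonneg hB
  have hAn := kDot_nonneg hA
  rcases (by omega : kDot A = 3 ∨ kDot A = 2) with hA3 | hA2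
  · -- B has excess 0
    obtain ⟨c, rfl⟩ := shape0 B hB (by omega)
    rcases shape3 A hA hA3 with ⟨a, b, rfl⟩ | ⟨a, b, m, rfl⟩ | ⟨a, b, m, rfl⟩ |
      ⟨a, b, m, n, rfl⟩
    · -- S1
      rw [evalS1] at hp
      obtain ⟨hb, hc⟩ := dioS1 a b c hp
      subst hb; subst hc
      refine ⟨a, Or.inl (Or.inl ?_)⟩
      simp [List.replicate]
    · exact absurd hp (by rw [evalS2]; intro hp; exact dioS2 a b m c (by linarith))
    · exact absurd hp (by rw [evalS3]; intro hp; exact dioS3 a b m c (by linarith))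
    · exact absurd hp (by rw [evalS4]; intro hp; exact dioS4 a b m n c (by linarith))
  · -- A has excess 2, B has excess 1
    obtain ⟨c, d, rfl⟩ := shape1 B hB (by omega)
    rcases shape2 A hA hA2 with ⟨a, b, rfl⟩ | ⟨a, b, m, rfl⟩
    · -- S5
      rw [evalS5] at hp
      rcases dioS5 a b c d hp with ⟨hb, hc, hd⟩ | ⟨ha, hb, hc⟩
      · subst hb; subst hc; subst hd
        refine ⟨a, Or.inr (Or.inl (Or.inl ?_))⟩
        simp [List.replicate]
      · subst ha; subst hb; subst hc
        refine ⟨d, Or.inr (Or.inr (Or.inr (Or.inr ?_)))⟩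
        simp [List.replicate, List.reverse_append]
    · -- S6
      rw [evalS6] at hp
      obtain ⟨hb, hc, hd, he⟩ := dioS6 a b m c d hp
      subst hb; subst hc; subst hd; subst he
      refine ⟨a, Or.inr (Or.inr (Or.inl (Or.inl ?_)))⟩
      simp [List.replicate]

def FamC (Q : List ℤ) : Prop :=
  ∃ k : ℕ,
    (Q = List.replicate k (2:ℤ) ++ [5, 1, 2, 2, 2] ∨
      Q = (List.replicate k (2:ℤ) ++ [5, 1, 2, 2, 2]).reverse) ∨
    (Q = List.replicate k (2:ℤ) ++ [4, 2, 1, 3, 2] ∨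
      Q = (List.replicate k (2:ℤ) ++ [4, 2, 1, 3, 2]).reverse) ∨
    (Q = List.replicate k (2:ℤ) ++ [3, 3, 1, 2, 3] ∨
      Q = (List.replicate k (2:ℤ) ++ [3, 3, 1, 2, 3]).reverse) ∨
    (Q = List.replicate k (2:ℤ) ++ [3, 2, 2, 1, 4] ∨
      Q = (List.replicate k (2:ℤ) ++ [3, 2, 2, 1, 4]).reverse)

lemma famC_reverse {Q : List ℤ} (h : FamC Q.reverse) : FamC Q := by
  obtain ⟨k, h⟩ := h
  have r1 : ∀ X : List ℤ, Q.reverse = X → Q = X.reverse := by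
    intro X hh; rw [← hh, List.reverse_reverse]
  have r2 : ∀ X : List ℤ, Q.reverse = X.reverse → Q = X := by
    intro X hh; exact List.reverse_injective hh
  refine ⟨k, ?_⟩
  rcases h with (h|h)|(h|h)|(h|h)|(h|h)
  · exact Or.inl (Or.inr (r1 _ h))
  · exact Or.inl (Or.inl (r2 _ h))
  · exact Or.inr (Or.inl (Or.inr (r1 _ h)))
  · exact Or.inr (Or.inl (Or.inl (r2 _ h)))
  · exact Or.inr (Or.inr (Or.inl (Or.inr (r1 _ h))))
  · exact Or.inr (Or.inr (Or.inl (Or.inl (r2 _ h))))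
  · exact Or.inr (Or.inr (Or.inr (Or.inr (r1 _ h))))
  · exact Or.inr (Or.inr (Or.inr (Or.inl (r2 _ h))))

lemma rep_flatMap (k : ℕ) :
    (List.replicate k (2:ℕ)).flatMap (fun a => [((a:ℕ):ℤ)]) = List.replicate k (2:ℤ) := by
  induction k with
  | zero => simp
  | succ n ih => simp [List.replicate_succ, ih]

/-- If a weight list contracts to a smooth point, contains a unique `(-1)`-curve
and `K·Q = 2`, then up to reversal `Q` is one of `[(2)_k, 5, 1, 2, 2, 2]`,
`[(2)_k, 4, 2, 1, 3, 2]`, `[(2)_k, 3, 3, 1, 2, 3]`, `[(2)_k, 3, 2, 2, 1, 4]`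
for some `k ≥ 0`. -/
theorem chain_KQ_two (Q : List ℤ) (hQ : ContractsToPoint Q)
    (huniq : Q.count 1 = 1) (hK : kDot Q = 2) :
    ∃ k : ℕ,
      (Q = List.replicate k 2 ++ [5, 1, 2, 2, 2] ∨
        Q = (List.replicate k 2 ++ [5, 1, 2, 2, 2]).reverse) ∨
      (Q = List.replicate k 2 ++ [4, 2, 1, 3, 2] ∨
        Q = (List.replicate k 2 ++ [4, 2, 1, 3, 2]).reverse) ∨
      (Q = List.replicate k 2 ++ [3, 3, 1, 2, 3] ∨
        Q = (List.replicate k 2 ++ [3, 3, 1, 2, 3]).reverse) ∨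
      (Q = List.replicate k 2 ++ [3, 2, 2, 1, 4] ∨
        Q = (List.replicate k 2 ++ [3, 2, 2, 1, 4]).reverse) := by
  obtain ⟨A, B, hQeq, hA1, hB1⟩ := decompose huniq
  subst hQeq
  have hpos := contracts_pos hQ
  have hA2 : ∀ x ∈ A, 2 ≤ x := by
    intro x hx
    have h1 := hpos x (by simp [hx])
    have h2 : x ≠ 1 := fun hh => hA1 (hh ▸ hx)
    omega
  have hB2 : ∀ x ∈ B, 2 ≤ x := by
    intro x hx
    have h1 := hpos x (by simp [hx])
    have h2 : x ≠ 1 := fun hh => hB1 (hh ▸ hx)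
    omega
  have hp := contracts_fM hQ
  rw [kDot_append, kDot_cons] at hK
  have hk : kDot A + kDot B = 3 := by omega
  have main : FamC (A ++ 1 :: B) := by
    rcases le_or_gt 2 (kDot A) with hge | hlt
    · exact core A B hA2 hB2 hk hge hp
    · have hAn := kDot_nonneg hA2
      have hgeB : 2 ≤ kDot B.reverse := by rw [kDot_reverse]; omega
      have hrev : (A ++ 1 :: B).reverse = B.reverse ++ 1 :: A.reverse := by simp
      have hp' : (fM (B.reverse ++ 1 :: A.reverse)).a = 1 := by
        rw [← hrev, fM_reverse]; exact hp
      have hres := core B.reverse A.reverse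
        (fun x hx => hB2 x (List.mem_reverse.mp hx))
        (fun x hx => hA2 x (List.mem_reverse.mp hx))
        (by rw [kDot_reverse, kDot_reverse]; omega) hgeB hp'
      apply famC_reverse
      rw [hrev]
      exact hres
  obtain ⟨k, h⟩ := main
  refine ⟨k, ?_⟩
  rcases h with (h|h)|(h|h)|(h|h)|(h|h)
  · exact Or.inl (Or.inl h)
  · exact Or.inl (Or.inr (by rw [h]; simp [rep_flatMap]))
  · exact Or.inr (Or.inl (Or.inl h))
  · exact Or.inr (Or.inl (Or.inr (by rw [h]; simp [rep_flatMap])))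
  · exact Or.inr (Or.inr (Or.inl (Or.inl h)))
  · exact Or.inr (Or.inr (Or.inl (Or.inr (by rw [h]; simp [rep_flatMap]))))
  · exact Or.inr (Or.inr (Or.inr (Or.inl h)))
  · exact Or.inr (Or.inr (Or.inr (Or.inr (by rw [h]; simp [rep_flatMap]))))
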